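/- Let $E, F$ be Riesz spaces and $S, T : E \to F$ orthogonally additive operators. Suppose that for every $x \in E$ the supremum $R(x) = \sup\{S(u) + T(v) : x = u \sqcup v\}$ exists in $F$, where the supremum is over all decompositions of $x$ into two disjoint summands. Then $R$ is an orthogonally additive operator and $R$ is the supremum $S \vee T$ of $S$ and $T$ in the ordered vector space $\mathcal{O}(E,F)$ of all orthogonally additive operators (ordered by $S \le T$ iff $T(x) - S(x) \ge 0$ for all $x$). -/

import Mathlib

/-- Disjointness in a Riesz space: `|x| ⊓ |y| = 0`. -/
def RDisjoint {E : Type*} [Lattice E] [AddCommGroup E] (x y : E) : Prop :=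
  |x| ⊓ |y| = 0

/-- `x` is a fragment of `e` (lateral order `x ⊑ e`): `x ⊥ (e - x)`. -/
def IsFragment {E : Type*} [Lattice E] [AddCommGroup E] (x e : E) : Prop :=
  RDisjoint x (e - x)

/-- An orthogonally additive operator. -/
def IsOAO {E F : Type*} [Lattice E] [AddCommGroup E] [Lattice F] [AddCommGroup F]
    (T : E → F) : Prop :=
  ∀ x y : E, RDisjoint x y → T (x + y) = T x + T y

/-!
Every disjoint decomposition `u ⊔ v` of `x + y` with `x ⊥ y` refines into disjoint
decompositions of `x` and of `y`: the pieces are the lateral meets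
`u⁺ ⊓ x⁺ - u⁻ ⊓ x⁻`, `u⁺ ⊓ y⁺ - u⁻ ⊓ y⁻`, … of the fragments `u, v, x, y` of `x + y`.
Conversely, disjoint decompositions of `x` and of `y` add up to one of `x + y`. So the set
of values `S u + T v` over decompositions of `x + y` is the pointwise sum of the
corresponding sets for `x` and `y`, and the supremum of a pointwise sum is the sum of the
suprema; this makes `R` orthogonally additive.
-/

section LatticeOrderedGroup

variable {α : Type*} [Lattice α] [AddCommGroup α] [AddLeftMono α]

lemma abs_posPart_le_abs (a : α) : |a⁺| ≤ |a| := by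
  rw [abs_of_nonneg (posPart_nonneg a), ← posPart_add_negPart]
  exact le_add_of_nonneg_right (negPart_nonneg a)

lemma abs_negPart_le_abs (a : α) : |a⁻| ≤ |a| := by
  rw [abs_of_nonneg (negPart_nonneg a), ← posPart_add_negPart]
  exact le_add_of_nonneg_left (posPart_nonneg a)

lemma add_inf_le_inf_add_inf {a b c : α} (ha : 0 ≤ a) (hb : 0 ≤ b) (hc : 0 ≤ c) :
    (a + b) ⊓ c ≤ a ⊓ c + b ⊓ c := by
  rw [inf_add, add_inf, add_inf]
  refine le_inf (le_inf inf_le_left (inf_le_right.trans (le_add_of_nonneg_left ha)))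
    (le_inf (inf_le_right.trans (le_add_of_nonneg_right hb))
      (inf_le_right.trans (le_add_of_nonneg_left hc)))

lemma eq_inf_add_inf_of_le_add {a b c : α} (ha : 0 ≤ a) (hb : 0 ≤ b) (hc : 0 ≤ c)
    (hab : a ⊓ b = 0) (hcab : c ≤ a + b) : c = c ⊓ a + c ⊓ b := by
  have hdisj : (c ⊓ a) ⊓ (c ⊓ b) = 0 :=
    le_antisymm (hab ▸ inf_le_inf inf_le_right inf_le_right) (le_inf (le_inf hc ha) (le_inf hc hb))
  refine le_antisymm ?_ ?_
  · calc c = (a + b) ⊓ c := (inf_eq_right.2 hcab).symm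
      _ ≤ a ⊓ c + b ⊓ c := add_inf_le_inf_add_inf ha hb hc
      _ = c ⊓ a + c ⊓ b := by rw [inf_comm a, inf_comm b]
  · rw [← inf_add_sup (c ⊓ a), hdisj, zero_add]
    exact sup_le inf_le_left inf_le_left

end LatticeOrderedGroup

namespace RDisjoint

section Group

variable {α : Type*} [Lattice α] [AddCommGroup α] {a b : α}

lemma symm (h : RDisjoint a b) : RDisjoint b a := by
  rwa [RDisjoint, inf_comm]

lemma neg (h : RDisjoint a b) : RDisjoint (-a) (-b) := by
  rwa [RDisjoint, abs_neg, abs_neg]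

end Group

variable {α : Type*} [Lattice α] [AddCommGroup α] [AddLeftMono α] {a b c x y : α}

lemma zero_right (a : α) : RDisjoint a 0 := by
  simp [RDisjoint]

lemma mono (h : RDisjoint x y) (ha : |a| ≤ |x|) (hb : |b| ≤ |y|) : RDisjoint a b :=
  le_antisymm ((inf_le_inf ha hb).trans_eq h) (le_inf (abs_nonneg a) (abs_nonneg b))

lemma inf_eq_zero (h : RDisjoint a b) (ha : 0 ≤ a) (hb : 0 ≤ b) : a ⊓ b = 0 := by
  rwa [RDisjoint, abs_of_nonneg ha, abs_of_nonneg hb] at h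

lemma add_left (hac : RDisjoint a c) (hbc : RDisjoint b c) : RDisjoint (a + b) c := by
  refine le_antisymm ?_ (le_inf (abs_nonneg _) (abs_nonneg c))
  calc |a + b| ⊓ |c| ≤ (|a| + |b|) ⊓ |c| := inf_le_inf_right _ (abs_add_le a b)
    _ ≤ |a| ⊓ |c| + |b| ⊓ |c| := add_inf_le_inf_add_inf (abs_nonneg a) (abs_nonneg b) (abs_nonneg c)
    _ = 0 := by rw [show |a| ⊓ |c| = 0 from hac, show |b| ⊓ |c| = 0 from hbc, add_zero]

lemma add_right (hab : RDisjoint a b) (hac : RDisjoint a c) : RDisjoint a (b + c) :=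
  (hab.symm.add_left hac.symm).symm

lemma posPart_add (h : RDisjoint a b) : (a + b)⁺ = a⁺ + b⁺ := by
  have hpos : RDisjoint (a⁺ + b⁺) (a⁻ + b⁻) := by
    have hpp : RDisjoint a⁺ b⁻ := h.mono (abs_posPart_le_abs a) (abs_negPart_le_abs b)
    have hnp : RDisjoint b⁺ a⁻ := h.symm.mono (abs_posPart_le_abs b) (abs_negPart_le_abs a)
    have hself (x : α) : RDisjoint x⁺ x⁻ := by
      rw [RDisjoint, abs_of_nonneg (posPart_nonneg x), abs_of_nonneg (negPart_nonneg x)]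
      exact posPart_inf_negPart_eq_zero x
    exact ((hself a).add_right hpp).add_left (hnp.add_right (hself b))
  have hP : 0 ≤ a⁺ + b⁺ := add_nonneg (posPart_nonneg a) (posPart_nonneg b)
  have hN : 0 ≤ a⁻ + b⁻ := add_nonneg (negPart_nonneg a) (negPart_nonneg b)
  have hsplit : a + b = (a⁺ + b⁺) - (a⁻ + b⁻) := by
    rw [← sub_add_sub_comm, posPart_sub_negPart, posPart_sub_negPart]
  have := inf_eq_sub_posPart_sub (a⁺ + b⁺) (a⁻ + b⁻)
  rw [hpos.inf_eq_zero hP hN, eq_comm, sub_eq_zero] at this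
  rw [hsplit]
  exact this.symm

lemma negPart_add (h : RDisjoint a b) : (a + b)⁻ = a⁻ + b⁻ := by
  have := h.neg.posPart_add
  rwa [← neg_add, posPart_neg, posPart_neg, posPart_neg] at this

lemma abs_add (h : RDisjoint a b) : |a + b| = |a| + |b| := by
  rw [← posPart_add_negPart, h.posPart_add, h.negPart_add, ← posPart_add_negPart a,
    ← posPart_add_negPart b]
  abel

lemma abs_le_abs_add (h : RDisjoint a b) : |a| ≤ |a + b| :=
  h.abs_add ▸ le_add_of_nonneg_right (abs_nonneg b)

lemma abs_le_abs_add' (h : RDisjoint a b) : |b| ≤ |a + b| :=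
  add_comm a b ▸ h.symm.abs_le_abs_add

lemma add_add {u₁ v₁ u₂ v₂ : α} (h₁ : RDisjoint u₁ v₁) (h₂ : RDisjoint u₂ v₂)
    (h : RDisjoint (u₁ + v₁) (u₂ + v₂)) : RDisjoint (u₁ + u₂) (v₁ + v₂) :=
  (h₁.add_right (h.mono h₁.abs_le_abs_add h₂.abs_le_abs_add')).add_left
    ((h.symm.mono h₂.abs_le_abs_add h₁.abs_le_abs_add').add_right h₂)

end RDisjoint

section LateralMeet

variable {α : Type*} [Lattice α] [AddCommGroup α]

/-- For fragments `a, b` of a common element this is their meet in the lateral order. -/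
def lateralInf (a b : α) : α := a⁺ ⊓ b⁺ - a⁻ ⊓ b⁻

lemma lateralInf_comm (a b : α) : lateralInf a b = lateralInf b a := by
  rw [lateralInf, lateralInf, inf_comm a⁺, inf_comm a⁻]

variable [AddLeftMono α]

lemma abs_lateralInf_le_left (a b : α) : |lateralInf a b| ≤ |a| := by
  have hp : 0 ≤ a⁺ ⊓ b⁺ := le_inf (posPart_nonneg a) (posPart_nonneg b)
  have hn : 0 ≤ a⁻ ⊓ b⁻ := le_inf (negPart_nonneg a) (negPart_nonneg b)
  calc |lateralInf a b| ≤ |a⁺ ⊓ b⁺| + |-(a⁻ ⊓ b⁻)| := by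
        rw [lateralInf, sub_eq_add_neg]
        exact abs_add_le _ _
    _ = a⁺ ⊓ b⁺ + a⁻ ⊓ b⁻ := by rw [abs_neg, abs_of_nonneg hp, abs_of_nonneg hn]
    _ ≤ a⁺ + a⁻ := add_le_add inf_le_left inf_le_left
    _ = |a| := posPart_add_negPart a

lemma abs_lateralInf_le_right (a b : α) : |lateralInf a b| ≤ |b| :=
  lateralInf_comm a b ▸ abs_lateralInf_le_left b a

variable {x y u v : α}

lemma posPart_eq_inf_add_inf (hxy : RDisjoint x y) (huv : RDisjoint u v) (h : x + y = u + v) :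
    u⁺ = u⁺ ⊓ x⁺ + u⁺ ⊓ y⁺ := by
  have hx := posPart_nonneg x
  have hy := posPart_nonneg y
  refine eq_inf_add_inf_of_le_add hx hy (posPart_nonneg u) ?_ ?_
  · exact (hxy.mono (abs_posPart_le_abs x) (abs_posPart_le_abs y)).inf_eq_zero hx hy
  · calc u⁺ ≤ u⁺ + v⁺ := le_add_of_nonneg_right (posPart_nonneg v)
      _ = x⁺ + y⁺ := by rw [← huv.posPart_add, ← hxy.posPart_add, h]

lemma eq_lateralInf_add_lateralInf (hxy : RDisjoint x y) (huv : RDisjoint u v)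
    (h : x + y = u + v) : u = lateralInf u x + lateralInf u y := by
  have hpos := posPart_eq_inf_add_inf hxy huv h
  have hneg := posPart_eq_inf_add_inf hxy.neg huv.neg (by rw [← neg_add, ← neg_add, h])
  simp only [posPart_neg] at hneg
  rw [lateralInf, lateralInf]
  conv_lhs => rw [← posPart_sub_negPart u, hpos, hneg]
  abel

lemma exists_refinement (hxy : RDisjoint x y) (huv : RDisjoint u v) (h : x + y = u + v) :
    ∃ u₁ u₂ v₁ v₂ : α, RDisjoint u₁ u₂ ∧ RDisjoint v₁ v₂ ∧ RDisjoint u₁ v₁ ∧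
      RDisjoint u₂ v₂ ∧ u = u₁ + u₂ ∧ v = v₁ + v₂ ∧ x = u₁ + v₁ ∧ y = u₂ + v₂ := by
  refine ⟨lateralInf u x, lateralInf u y, lateralInf v x, lateralInf v y,
    hxy.mono (abs_lateralInf_le_right _ _) (abs_lateralInf_le_right _ _),
    hxy.mono (abs_lateralInf_le_right _ _) (abs_lateralInf_le_right _ _),
    huv.mono (abs_lateralInf_le_left _ _) (abs_lateralInf_le_left _ _),
    huv.mono (abs_lateralInf_le_left _ _) (abs_lateralInf_le_left _ _),
    eq_lateralInf_add_lateralInf hxy huv h,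
    eq_lateralInf_add_lateralInf hxy huv.symm (h.trans (add_comm u v)), ?_, ?_⟩
  · rw [lateralInf_comm u, lateralInf_comm v]
    exact eq_lateralInf_add_lateralInf huv hxy h.symm
  · rw [lateralInf_comm u, lateralInf_comm v]
    exact eq_lateralInf_add_lateralInf huv hxy.symm (h.symm.trans (add_comm x y))

end LateralMeet

section OrthogonallyAdditive

variable {E F : Type*} [Lattice E] [AddCommGroup E] [AddLeftMono E] [Lattice F] [AddCommGroup F]

def disjointSums (S T : E → F) (x : E) : Set F :=
  {z | ∃ u v : E, RDisjoint u v ∧ x = u + v ∧ z = S u + T v}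

lemma IsOAO.map_zero {S : E → F} (hS : IsOAO S) : S 0 = 0 := by
  simpa using hS 0 0 (RDisjoint.zero_right 0)

lemma apply_mem_disjointSums_left (S : E → F) {T : E → F} (hT : IsOAO T) (x : E) :
    S x ∈ disjointSums S T x :=
  ⟨x, 0, RDisjoint.zero_right x, (add_zero x).symm, by rw [hT.map_zero, add_zero]⟩

lemma apply_mem_disjointSums_right {S : E → F} (hS : IsOAO S) (T : E → F) (x : E) :
    T x ∈ disjointSums S T x :=
  ⟨0, x, (RDisjoint.zero_right x).symm, (zero_add x).symm, by rw [hS.map_zero, zero_add]⟩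

open scoped Pointwise in
lemma disjointSums_add {S T : E → F} (hS : IsOAO S) (hT : IsOAO T) {x y : E}
    (hxy : RDisjoint x y) :
    disjointSums S T (x + y) = disjointSums S T x + disjointSums S T y := by
  ext z
  constructor
  · rintro ⟨u, v, huv, hsum, rfl⟩
    obtain ⟨u₁, u₂, v₁, v₂, hu, hv, h₁, h₂, rfl, rfl, rfl, rfl⟩ := exists_refinement hxy huv hsum
    refine ⟨S u₁ + T v₁, ⟨u₁, v₁, h₁, rfl, rfl⟩, S u₂ + T v₂, ⟨u₂, v₂, h₂, rfl, rfl⟩, ?_⟩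
    rw [hS u₁ u₂ hu, hT v₁ v₂ hv]
    exact add_add_add_comm _ _ _ _
  · rintro ⟨_, ⟨u₁, v₁, h₁, rfl, rfl⟩, _, ⟨u₂, v₂, h₂, rfl, rfl⟩, rfl⟩
    have hu := hxy.mono h₁.abs_le_abs_add h₂.abs_le_abs_add
    have hv := hxy.mono h₁.abs_le_abs_add' h₂.abs_le_abs_add'
    refine ⟨u₁ + u₂, v₁ + v₂, h₁.add_add h₂ hxy, add_add_add_comm _ _ _ _, ?_⟩
    rw [hS u₁ u₂ hu, hT v₁ v₂ hv]
    exact add_add_add_comm _ _ _ _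

end OrthogonallyAdditive

variable {E F : Type*}
  [Lattice E] [AddCommGroup E] [CovariantClass E E (· + ·) (· ≤ ·)]
  [Lattice F] [AddCommGroup F] [CovariantClass F F (· + ·) (· ≤ ·)]

/-- If the pointwise supremum formula exists, it defines the join `S ∨ T` of two OAOs
in the ordered vector space of all OAOs. -/
theorem oao_sup_exists (S T : E → F) (hS : IsOAO S) (hT : IsOAO T) (R : E → F)
    (hR : ∀ x : E,
      IsLUB {z : F | ∃ u v : E, RDisjoint u v ∧ x = u + v ∧ z = S u + T v} (R x)) :
    IsOAO R ∧ (∀ x, S x ≤ R x) ∧ (∀ x, T x ≤ R x) ∧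
    ∀ P : E → F, IsOAO P → (∀ x, S x ≤ P x) → (∀ x, T x ≤ P x) → ∀ x, R x ≤ P x := by
  have hR : ∀ x, IsLUB (disjointSums S T x) (R x) := hR
  refine ⟨fun x y hxy => ?_, fun x => (hR x).1 (apply_mem_disjointSums_left S hT x),
    fun x => (hR x).1 (apply_mem_disjointSums_right hS T x), fun P hP hSP hTP x => ?_⟩
  · have hRxy := hR (x + y)
    rw [disjointSums_add hS hT hxy] at hRxy
    exact hRxy.unique ((hR x).add (hR y))
  · refine (hR x).2 ?_
    rintro _ ⟨u, v, huv, rfl, rfl⟩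
    exact (add_le_add (hSP u) (hTP v)).trans_eq (hP u v huv).symm
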